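/- arXiv:1901.09574 — 2 statements merged into one kernel-verified Lean document; each statement's English description precedes it below -/
import Mathlib

section
/- Let J be an ideal of K{X;r} (resp. of K{X;r}°) and let G = (g_1,…,g_s) be a Gröbner basis of J. Then G generates J as an ideal of K{X;r} (resp. of K{X;r}°). -/
open MvPowerSeries

noncomputable section

/-- A normalized discrete valuation on a field `K`, complete with respect to
the associated distance. -/
structure IsCDVField {K : Type*} [Field K] (val : K → WithTop ℤ) : Prop where
  eq_top_iff : ∀ x : K, val x = ⊤ ↔ x = 0
  map_one : val 1 = 0
  map_mul : ∀ x y : K, val (x * y) = val x + val y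
  min_le_val_add : ∀ x y : K, min (val x) (val y) ≤ val (x + y)
  surjective : ∀ m : ℤ, ∃ x : K, val x = (m : WithTop ℤ)
  complete : ∀ u : ℕ → K,
      (∀ M : ℤ, ∃ N : ℕ, ∀ p, N ≤ p → ∀ q, N ≤ q → (M : WithTop ℤ) ≤ val (u p - u q)) →
      ∃ l : K, ∀ M : ℤ, ∃ N : ℕ, ∀ p, N ≤ p → (M : WithTop ℤ) ≤ val (u p - l)

/-- A monomial order: a well-order compatible with addition. -/
structure IsMonomialOrder {M : Type*} [AddCommMonoid M] (mo : M → M → Prop) : Prop where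
  refl : ∀ i, mo i i
  trans : ∀ i j k, mo i j → mo j k → mo i k
  antisymm : ∀ i j, mo i j → mo j i → i = j
  total : ∀ i j, mo i j ∨ mo j i
  add_right : ∀ i j k, mo i j → mo (i + k) (j + k)
  wf : WellFounded fun i j => mo i j ∧ i ≠ j

variable {K : Type*} [Field K] {n : ℕ}

/-- The valuation of `K`, with values in `WithTop ℚ`. -/
def valQ (val : K → WithTop ℤ) (a : K) : WithTop ℚ :=
  WithTop.map (fun m : ℤ => (m : ℚ)) (val a)

/-- The dot product `r·i`. -/
def wt (r : Fin n → ℚ) (i : Fin n →₀ ℕ) : ℚ :=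
  ∑ j, r j * (i j : ℚ)

/-- `val_r` of the term `a·X^i`, namely `val a - r·i`. -/
def tval (val : K → WithTop ℤ) (r : Fin n → ℚ) (a : K) (i : Fin n →₀ ℕ) : WithTop ℚ :=
  valQ val a + ((-wt r i : ℚ) : WithTop ℚ)

/-- `val_r` of the coefficient term of `f` at exponent `i`. -/
def cval (val : K → WithTop ℤ) (r : Fin n → ℚ) (f : MvPowerSeries (Fin n) K)
    (i : Fin n →₀ ℕ) : WithTop ℚ :=
  tval val r (MvPowerSeries.coeff i f) i

/-- Membership in the Tate algebra `K{X; r}`: the coefficient valuations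
`val(a_i) - r·i` tend to `+∞`, i.e. for each `C` only finitely many of them are `< C`. -/
def IsTate (val : K → WithTop ℤ) (r : Fin n → ℚ) (f : MvPowerSeries (Fin n) K) : Prop :=
  ∀ C : ℚ, {i : Fin n →₀ ℕ | cval val r f i < (C : WithTop ℚ)}.Finite

/-- The Tate algebra `K{X; r}`, as a subset of the ring of power series. -/
def TateSet (val : K → WithTop ℤ) (r : Fin n → ℚ) : Set (MvPowerSeries (Fin n) K) :=
  {f | IsTate val r f}

/-- The integral Tate algebra `K{X; r}°` (Tate series of nonnegative Gauss valuation). -/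
def TateIntSet (val : K → WithTop ℤ) (r : Fin n → ℚ) : Set (MvPowerSeries (Fin n) K) :=
  {f | IsTate val r f ∧ ∀ i, (0 : WithTop ℚ) ≤ cval val r f i}

/-- The Gauss valuation of `f` equals `v`. -/
def GaussValEq (val : K → WithTop ℤ) (r : Fin n → ℚ) (f : MvPowerSeries (Fin n) K)
    (v : ℚ) : Prop :=
  (∀ i, (v : WithTop ℚ) ≤ cval val r f i) ∧ ∃ i, cval val r f i = (v : WithTop ℚ)

/-- `J` is an ideal of the subring `A` of the power series ring. -/
structure IsIdealOf (A J : Set (MvPowerSeries (Fin n) K)) : Prop where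
  subset : J ⊆ A
  zero_mem : (0 : MvPowerSeries (Fin n) K) ∈ J
  add_mem : ∀ f ∈ J, ∀ g ∈ J, f + g ∈ J
  neg_mem : ∀ f ∈ J, -f ∈ J
  smul_mem : ∀ a ∈ A, ∀ f ∈ J, a * f ∈ J

/-- `a·X^i < b·X^j` for the term order attached to `val`, `r` and the monomial order `mo`. -/
def TermLt (val : K → WithTop ℤ) (r : Fin n → ℚ) (mo : (Fin n →₀ ℕ) → (Fin n →₀ ℕ) → Prop)
    (a : K) (i : Fin n →₀ ℕ) (b : K) (j : Fin n →₀ ℕ) : Prop :=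
  tval val r b j < tval val r a i ∨ (tval val r a i = tval val r b j ∧ i ≠ j ∧ mo i j)

/-- `a·X^i ≤ b·X^j` for the term order. -/
def TermLe (val : K → WithTop ℤ) (r : Fin n → ℚ) (mo : (Fin n →₀ ℕ) → (Fin n →₀ ℕ) → Prop)
    (a : K) (i : Fin n →₀ ℕ) (b : K) (j : Fin n →₀ ℕ) : Prop :=
  tval val r b j < tval val r a i ∨ (tval val r a i = tval val r b j ∧ mo i j)

/-- `a·X^i` is the leading term of `f`. -/
def IsLeadingTerm (val : K → WithTop ℤ) (r : Fin n → ℚ)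
    (mo : (Fin n →₀ ℕ) → (Fin n →₀ ℕ) → Prop)
    (f : MvPowerSeries (Fin n) K) (a : K) (i : Fin n →₀ ℕ) : Prop :=
  MvPowerSeries.coeff i f = a ∧ a ≠ 0 ∧
    ∀ j, MvPowerSeries.coeff j f ≠ 0 → j ≠ i →
      TermLt val r mo (MvPowerSeries.coeff j f) j a i

/-- `a·X^i` divides `b·X^j` in the monoid of terms `T(r)`. -/
def TDiv (a : K) (i : Fin n →₀ ℕ) (b : K) (j : Fin n →₀ ℕ) : Prop :=
  a ≠ 0 ∧ b ≠ 0 ∧ ∃ k, j = i + k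

/-- `a·X^i` divides `b·X^j` in the monoid of integral terms `T°(r)`. -/
def TIntDiv (val : K → WithTop ℤ) (r : Fin n → ℚ) (a : K) (i : Fin n →₀ ℕ)
    (b : K) (j : Fin n →₀ ℕ) : Prop :=
  a ≠ 0 ∧ b ≠ 0 ∧ ∃ k, j = i + k ∧ (0 : WithTop ℚ) ≤ tval val r (b * a⁻¹) k

/-- `g` is a Gröbner basis of `J`, as an ideal of `K{X;r}`. -/
def IsGB (val : K → WithTop ℤ) (r : Fin n → ℚ) (mo : (Fin n →₀ ℕ) → (Fin n →₀ ℕ) → Prop)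
    (J : Set (MvPowerSeries (Fin n) K)) {s : ℕ} (g : Fin s → MvPowerSeries (Fin n) K) : Prop :=
  (∀ k, g k ∈ J ∧ g k ≠ 0) ∧
    ∀ f ∈ J, ∀ a i, IsLeadingTerm val r mo f a i →
      ∃ k b j, IsLeadingTerm val r mo (g k) b j ∧ TDiv b j a i

/-- `g` is a Gröbner basis of `J`, as an ideal of `K{X;r}°`. -/
def IsGBInt (val : K → WithTop ℤ) (r : Fin n → ℚ) (mo : (Fin n →₀ ℕ) → (Fin n →₀ ℕ) → Prop)
    (J : Set (MvPowerSeries (Fin n) K)) {s : ℕ} (g : Fin s → MvPowerSeries (Fin n) K) : Prop :=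
  (∀ k, g k ∈ J ∧ g k ≠ 0) ∧
    ∀ f ∈ J, ∀ a i, IsLeadingTerm val r mo f a i →
      ∃ k b j, IsLeadingTerm val r mo (g k) b j ∧ TIntDiv val r b j a i

/-- The set `LT(J)` of leading terms of nonzero elements of `J`. -/
def LTSet (val : K → WithTop ℤ) (r : Fin n → ℚ) (mo : (Fin n →₀ ℕ) → (Fin n →₀ ℕ) → Prop)
    (J : Set (MvPowerSeries (Fin n) K)) : Set (K × (Fin n →₀ ℕ)) :=
  {t | ∃ f ∈ J, IsLeadingTerm val r mo f t.1 t.2}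

/-- Exponents of elements of `LT(J)`: the image of `LT(J)` modulo units of `K`. -/
def LTExpSet (val : K → WithTop ℤ) (r : Fin n → ℚ) (mo : (Fin n →₀ ℕ) → (Fin n →₀ ℕ) → Prop)
    (J : Set (MvPowerSeries (Fin n) K)) : Set (Fin n →₀ ℕ) :=
  {i | ∃ a, (a, i) ∈ LTSet val r mo J}

/-- The skeleton of `LT(J)` (modulo units of `K`): minimal elements for divisibility. -/
def SkelExp (val : K → WithTop ℤ) (r : Fin n → ℚ) (mo : (Fin n →₀ ℕ) → (Fin n →₀ ℕ) → Prop)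
    (J : Set (MvPowerSeries (Fin n) K)) : Set (Fin n →₀ ℕ) :=
  {i | i ∈ LTExpSet val r mo J ∧ ∀ j ∈ LTExpSet val r mo J, (∃ k, i = j + k) → j = i}

/-- The image of `LT(J)` modulo units of `K°`: pairs (exponent, valuation of the term). -/
def LTClassSet (val : K → WithTop ℤ) (r : Fin n → ℚ) (mo : (Fin n →₀ ℕ) → (Fin n →₀ ℕ) → Prop)
    (J : Set (MvPowerSeries (Fin n) K)) : Set ((Fin n →₀ ℕ) × ℚ) :=
  {c | ∃ a, (a, c.1) ∈ LTSet val r mo J ∧ tval val r a c.1 = (c.2 : WithTop ℚ)}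

/-- Divisibility of classes of integral terms modulo units of `K°`. -/
def ClassDiv {n : ℕ} (c d : (Fin n →₀ ℕ) × ℚ) : Prop :=
  (∃ k, d.1 = c.1 + k) ∧ c.2 ≤ d.2

/-- The skeleton of `LT(J)` modulo units of `K°`. -/
def SkelClass (val : K → WithTop ℤ) (r : Fin n → ℚ) (mo : (Fin n →₀ ℕ) → (Fin n →₀ ℕ) → Prop)
    (J : Set (MvPowerSeries (Fin n) K)) : Set ((Fin n →₀ ℕ) × ℚ) :=
  {c | c ∈ LTClassSet val r mo J ∧ ∀ d ∈ LTClassSet val r mo J, ClassDiv d c → d = c}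

/-- Minimal Gröbner basis of an ideal of `K{X;r}`: the classes of the leading terms
modulo units of `K` are pairwise distinct and are exactly the skeleton of `LT(J)`. -/
def IsMinGB (val : K → WithTop ℤ) (r : Fin n → ℚ) (mo : (Fin n →₀ ℕ) → (Fin n →₀ ℕ) → Prop)
    (J : Set (MvPowerSeries (Fin n) K)) {s : ℕ} (g : Fin s → MvPowerSeries (Fin n) K) : Prop :=
  IsGB val r mo J g ∧ ∃ e : Fin s → (Fin n →₀ ℕ),
    (∀ k, ∃ a, IsLeadingTerm val r mo (g k) a (e k)) ∧
    Function.Injective e ∧ Set.range e = SkelExp val r mo J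

/-- Minimal Gröbner basis of an ideal of `K{X;r}°`. -/
def IsMinGBInt (val : K → WithTop ℤ) (r : Fin n → ℚ) (mo : (Fin n →₀ ℕ) → (Fin n →₀ ℕ) → Prop)
    (J : Set (MvPowerSeries (Fin n) K)) {s : ℕ} (g : Fin s → MvPowerSeries (Fin n) K) : Prop :=
  IsGBInt val r mo J g ∧ ∃ e : Fin s → ((Fin n →₀ ℕ) × ℚ),
    (∀ k, ∃ a, IsLeadingTerm val r mo (g k) a (e k).1 ∧
      tval val r a (e k).1 = ((e k).2 : WithTop ℚ)) ∧
    Function.Injective e ∧ Set.range e = SkelClass val r mo J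

/-- The leading term of `f` (via choice). -/
def leadTerm (val : K → WithTop ℤ) (r : Fin n → ℚ) (mo : (Fin n →₀ ℕ) → (Fin n →₀ ℕ) → Prop)
    (f : MvPowerSeries (Fin n) K) : K × (Fin n →₀ ℕ) :=
  Classical.epsilon fun p => IsLeadingTerm val r mo f p.1 p.2

/-- Multiplication of a power series by the term `t`. -/
def termMul (t : K × (Fin n →₀ ℕ)) (f : MvPowerSeries (Fin n) K) : MvPowerSeries (Fin n) K :=
  (MvPowerSeries.monomial t.2 t.1) * f

/-- The S-polynomial `S(f, g) = (LT(g)/gcd(LT f, LT g))·f - (LT(f)/gcd(LT f, LT g))·g`. -/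
def Spoly (val : K → WithTop ℤ) (π : K) (r : Fin n → ℚ)
    (mo : (Fin n →₀ ℕ) → (Fin n →₀ ℕ) → Prop)
    (f g : MvPowerSeries (Fin n) K) : MvPowerSeries (Fin n) K :=
  let a := (leadTerm val r mo f).1
  let i := (leadTerm val r mo f).2
  let b := (leadTerm val r mo g).1
  let j := (leadTerm val r mo g).2
  let m : ℤ := min (WithTop.untopD 0 (val a)) (WithTop.untopD 0 (val b))
  termMul (b * π ^ (-m), j - i) f - termMul (a * π ^ (-m), i - j) g

/-- `f` reduces to zero modulo the family `g` with quotients in `A`. -/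
def ReducesToZero (val : K → WithTop ℤ) (r : Fin n → ℚ)
    (mo : (Fin n →₀ ℕ) → (Fin n →₀ ℕ) → Prop) (A : Set (MvPowerSeries (Fin n) K))
    {s : ℕ} (g : Fin s → MvPowerSeries (Fin n) K) (f : MvPowerSeries (Fin n) K) : Prop :=
  f = 0 ∨ ∃ q : Fin s → MvPowerSeries (Fin n) K, (∀ k, q k ∈ A) ∧ f = ∑ k, q k * g k ∧
    ∀ k i, MvPowerSeries.coeff i (q k) ≠ 0 →
      ∀ b j, IsLeadingTerm val r mo (g k) b j →
      ∀ a₀ i₀, IsLeadingTerm val r mo f a₀ i₀ →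
        TermLe val r mo (MvPowerSeries.coeff i (q k) * b) (i + j) a₀ i₀


/-!
Run the division algorithm: while the remainder `F m ∈ J` is nonzero, the Gröbner basis
property gives a term `c X^l` (integral in the `K{X;r}°` case) with `LT(F m) = c X^l LT(g k)`,
and `F (m + 1) = F m - c X^l g k` has all its terms strictly below `LT(F m)`. Since the
monomial order is a well-order and `val_r` of terms is discrete, the leading terms of the
remainders have `val_r → +∞`, hence so do the remainders and the quotient terms for the Gauss
valuation. By completeness of `K` the quotient series `q k` converge; they lie in `K{X;r}`
(resp. `K{X;r}°`), which is closed for the Gauss valuation, and `f = ∑ q k g k` in the limit.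
-/

section Valuation

variable {val : K → WithTop ℤ}

lemma map_intCast_le_map_intCast_iff {a b : WithTop ℤ} :
    WithTop.map (fun m : ℤ => (m : ℚ)) a ≤ WithTop.map (fun m : ℤ => (m : ℚ)) b ↔ a ≤ b :=
  WithTop.map_le_iff (fun m : ℤ => (m : ℚ)) Int.cast_le

omit [Field K] in
lemma coe_le_valQ_iff {M : ℤ} {x : K} :
    ((M : ℚ) : WithTop ℚ) ≤ valQ val x ↔ (M : WithTop ℤ) ≤ val x :=
  map_intCast_le_map_intCast_iff (a := (M : WithTop ℤ))

def IsCDVField.valuation (hv : IsCDVField val) : AddValuation K (WithTop ℚ) :=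
  AddValuation.of (valQ val) (by simp [valQ, (hv.eq_top_iff 0).2 rfl])
    (by simp [valQ, hv.map_one])
    (fun x y => min_le_iff.2 <| (min_le_iff.1 (hv.min_le_val_add x y)).imp
      map_intCast_le_map_intCast_iff.2 map_intCast_le_map_intCast_iff.2)
    (fun x y => by
      rw [valQ, valQ, valQ, hv.map_mul]
      exact WithTop.map_add (Int.castAddHom ℚ) _ _)

lemma IsCDVField.valQ_eq_top_iff (hv : IsCDVField val) {x : K} : valQ val x = ⊤ ↔ x = 0 :=
  hv.valuation.top_iff

theorem IsCDVField.exists_forall_le_valQ_sub_sum (hv : IsCDVField val) {x : ℕ → K}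
    (hx : ∀ C : ℚ, ∃ N, ∀ m ≥ N, (C : WithTop ℚ) ≤ valQ val (x m)) :
    ∃ l, ∀ (C : ℚ) (N : ℕ), (∀ m ≥ N, (C : WithTop ℚ) ≤ valQ val (x m)) →
      ∀ M ≥ N, (C : WithTop ℚ) ≤ valQ val (l - ∑ m ∈ Finset.range M, x m) := by
  have tail : ∀ (C : ℚ) N, (∀ m ≥ N, (C : WithTop ℚ) ≤ valQ val (x m)) → ∀ M ≥ N, ∀ M' ≥ M,
      (C : WithTop ℚ) ≤ valQ val (∑ m ∈ Finset.range M', x m - ∑ m ∈ Finset.range M, x m) := by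
    intro C N hN M hM M' hM'
    rw [Finset.sum_range_sub_sum_range hM']
    exact hv.valuation.map_le_sum fun m hm => hN m (hM.trans (Finset.mem_filter.1 hm).2)
  obtain ⟨l, hl⟩ := hv.complete (fun M => ∑ m ∈ Finset.range M, x m) fun M => by
    obtain ⟨N, hN⟩ := hx M
    refine ⟨N, fun p hp q hq => coe_le_valQ_iff.1 ?_⟩
    rw [← sub_sub_sub_cancel_right _ _ (∑ m ∈ Finset.range N, x m)]
    exact hv.valuation.map_le_sub (tail _ N hN N le_rfl p hp) (tail _ N hN N le_rfl q hq)
  refine ⟨l, fun C N hN M hM => ?_⟩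
  obtain ⟨P, hP⟩ := hl ⌈C⌉
  rw [← sub_sub_sub_cancel_left _ l (∑ m ∈ Finset.range (max M P), x m)]
  refine hv.valuation.map_le_sub (tail C N hN M hM _ (le_max_left _ _)) ?_
  exact le_trans (by exact_mod_cast Int.le_ceil C) (coe_le_valQ_iff.2 (hP _ (le_max_right _ _)))

end Valuation

section TermValuation

variable {val : K → WithTop ℤ} {r : Fin n → ℚ} {mo : (Fin n →₀ ℕ) → (Fin n →₀ ℕ) → Prop}

lemma wt_add (i j : Fin n →₀ ℕ) : wt r (i + j) = wt r i + wt r j := by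
  simp [wt, mul_add, Finset.sum_add_distrib]

lemma exists_pos_mul_wt_eq_int (r : Fin n → ℚ) :
    ∃ D : ℕ, 0 < D ∧ ∀ i, ∃ z : ℤ, (D : ℚ) * wt r i = z := by
  refine ⟨∏ j, (r j).den, Finset.prod_pos fun j _ => (r j).pos, fun i => ?_⟩
  have hint : ∀ j, ∃ z : ℤ, ((∏ j, (r j).den : ℕ) : ℚ) * r j = z := fun j => by
    obtain ⟨c, hc⟩ := Finset.dvd_prod_of_mem (fun j => (r j).den) (Finset.mem_univ j)
    exact ⟨(r j).num * c, by rw [hc]; push_cast; rw [← Rat.mul_den_eq_num]; ring⟩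
  choose z hz using hint
  refine ⟨∑ j, z j * i j, ?_⟩
  simp only [wt, Finset.mul_sum, ← mul_assoc, hz]
  push_cast
  rfl

omit [Field K] in
lemma le_tval_iff {C : ℚ} {a : K} {i : Fin n →₀ ℕ} :
    (C : WithTop ℚ) ≤ tval val r a i ↔ ((C + wt r i : ℚ) : WithTop ℚ) ≤ valQ val a := by
  rw [tval]
  induction valQ val a using WithTop.recTopCoe with
  | top => simp
  | coe v =>
    norm_cast
    constructor <;> intro h <;> linarith

lemma tval_eq_top_iff (hv : IsCDVField val) {a : K} {i : Fin n →₀ ℕ} :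
    tval val r a i = ⊤ ↔ a = 0 := by
  simp [tval, hv.valQ_eq_top_iff]

lemma tval_zero (hv : IsCDVField val) (i : Fin n →₀ ℕ) : tval val r 0 i = ⊤ :=
  (tval_eq_top_iff hv).2 rfl

lemma tval_ne_top (hv : IsCDVField val) {a : K} (ha : a ≠ 0) (i : Fin n →₀ ℕ) :
    tval val r a i ≠ ⊤ :=
  (tval_eq_top_iff hv).not.2 ha

lemma tval_mul (hv : IsCDVField val) (a b : K) (i j : Fin n →₀ ℕ) :
    tval val r (a * b) (i + j) = tval val r a i + tval val r b j := by
  rw [tval, tval, tval, show valQ val (a * b) = valQ val a + valQ val b from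
    hv.valuation.map_mul a b, wt_add, neg_add, WithTop.coe_add, add_add_add_comm]

lemma tval_min_le_sub (hv : IsCDVField val) (x y : K) (e : Fin n →₀ ℕ) :
    min (tval val r x e) (tval val r y e) ≤ tval val r (x - y) e := by
  rw [tval, tval, tval, min_add_add_right]
  exact add_le_add_left (hv.valuation.map_sub x y) _

lemma exists_tval_eq (hv : IsCDVField val) {a : K} (ha : a ≠ 0) (i : Fin n →₀ ℕ) :
    ∃ z : ℤ, tval val r a i = (((z : ℚ) - wt r i : ℚ) : WithTop ℚ) := by
  obtain ⟨z, hz⟩ := WithTop.ne_top_iff_exists.1 ((hv.eq_top_iff a).not.2 ha)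
  refine ⟨z, ?_⟩
  rw [tval, valQ, ← hz, WithTop.map_coe, ← WithTop.coe_add, sub_eq_add_neg]

lemma termLt_zero (hv : IsCDVField val) {a : K} (ha : a ≠ 0) (i e : Fin n →₀ ℕ) :
    TermLt val r mo 0 e a i :=
  Or.inl (by rw [tval_zero hv]; exact lt_top_iff_ne_top.2 (tval_ne_top hv ha i))

omit [Field K] in
lemma TermLt.tval_le {x a : K} {e i : Fin n →₀ ℕ} (h : TermLt val r mo x e a i) :
    tval val r a i ≤ tval val r x e :=
  h.elim le_of_lt fun h => h.1.ge

lemma TermLt.sub (hv : IsCDVField val) {x y a : K} {e i : Fin n →₀ ℕ}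
    (hx : TermLt val r mo x e a i) (hy : TermLt val r mo y e a i) :
    TermLt val r mo (x - y) e a i := by
  have hmin := (le_min hx.tval_le hy.tval_le).trans (tval_min_le_sub hv x y e)
  by_cases hmo : e ≠ i ∧ mo e i
  · exact hmin.lt_or_eq.imp id fun h => ⟨h.symm, hmo⟩
  · have hlt : ∀ {z : K}, TermLt val r mo z e a i → tval val r a i < tval val r z e :=
      fun h => h.resolve_right fun h' => hmo h'.2
    exact Or.inl ((lt_min (hlt hx) (hlt hy)).trans_le (tval_min_le_sub hv x y e))

lemma TermLt.mul_left (hv : IsCDVField val) (hmo : IsMonomialOrder mo) {x a c : K}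
    {e i : Fin n →₀ ℕ} (h : TermLt val r mo x e a i) (hc : c ≠ 0) (l : Fin n →₀ ℕ) :
    TermLt val r mo (c * x) (l + e) (c * a) (l + i) := by
  rw [TermLt, tval_mul hv, tval_mul hv]
  rcases h with h | ⟨h, hne, hlt⟩
  · exact Or.inl (WithTop.add_lt_add_left (tval_ne_top hv hc l) h)
  · refine Or.inr ⟨by rw [h], fun h' => hne (add_left_cancel h'), ?_⟩
    simpa only [add_comm l] using hmo.add_right e i l hlt

omit [Field K] in
lemma termLe_total (hmo : IsMonomialOrder mo) (x y : K) (e j : Fin n →₀ ℕ) :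
    TermLe val r mo x e y j ∨ TermLe val r mo y j x e := by
  rcases lt_trichotomy (tval val r x e) (tval val r y j) with h | h | h
  · exact Or.inr (Or.inl h)
  · exact (hmo.total e j).imp (fun h' => Or.inr ⟨h, h'⟩) fun h' => Or.inr ⟨h.symm, h'⟩
  · exact Or.inl (Or.inl h)

omit [Field K] in
lemma TermLe.trans (hmo : IsMonomialOrder mo) {x y z : K} {e j k : Fin n →₀ ℕ}
    (h₁ : TermLe val r mo x e y j) (h₂ : TermLe val r mo y j z k) : TermLe val r mo x e z k := by
  rcases h₁ with h₁ | ⟨h₁, h₁'⟩ <;> rcases h₂ with h₂ | ⟨h₂, h₂'⟩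
  · exact Or.inl (h₂.trans h₁)
  · exact Or.inl (h₂ ▸ h₁)
  · exact Or.inl (h₁ ▸ h₂)
  · exact Or.inr ⟨h₁.trans h₂, hmo.trans e j k h₁' h₂'⟩

end TermValuation

section GaussValuation

variable {val : K → WithTop ℤ} {r : Fin n → ℚ}

def GaussValGe (val : K → WithTop ℤ) (r : Fin n → ℚ) (f : MvPowerSeries (Fin n) K) (C : ℚ) :
    Prop :=
  ∀ i, (C : WithTop ℚ) ≤ cval val r f i

lemma le_cval_add (hv : IsCDVField val) {f g : MvPowerSeries (Fin n) K} {C : ℚ}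
    {e : Fin n →₀ ℕ} (hf : (C : WithTop ℚ) ≤ cval val r f e)
    (hg : (C : WithTop ℚ) ≤ cval val r g e) : (C : WithTop ℚ) ≤ cval val r (f + g) e := by
  rw [cval, map_add, le_tval_iff]
  exact hv.valuation.map_le_add (le_tval_iff.1 hf) (le_tval_iff.1 hg)

lemma gaussValGe_zero (hv : IsCDVField val) (C : ℚ) : GaussValGe val r 0 C := fun e => by
  rw [cval, map_zero, tval_zero hv]
  exact le_top

lemma GaussValGe.sub (hv : IsCDVField val) {f g : MvPowerSeries (Fin n) K} {C : ℚ}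
    (hf : GaussValGe val r f C) (hg : GaussValGe val r g C) : GaussValGe val r (f - g) C :=
  fun e => by
    rw [cval, map_sub, le_tval_iff]
    exact hv.valuation.map_le_sub (le_tval_iff.1 (hf e)) (le_tval_iff.1 (hg e))

lemma gaussValGe_sum (hv : IsCDVField val) {ι : Type*} (s : Finset ι)
    {f : ι → MvPowerSeries (Fin n) K} {C : ℚ} (hf : ∀ i ∈ s, GaussValGe val r (f i) C) :
    GaussValGe val r (∑ i ∈ s, f i) C := fun e => by
  rw [cval, map_sum, le_tval_iff]
  exact hv.valuation.map_le_sum fun i hi => le_tval_iff.1 (hf i hi e)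

lemma GaussValGe.mono {f : MvPowerSeries (Fin n) K} {C D : ℚ} (hf : GaussValGe val r f C)
    (hDC : D ≤ C) : GaussValGe val r f D :=
  fun e => le_trans (by exact_mod_cast hDC) (hf e)

lemma GaussValGe.mul (hv : IsCDVField val) {f g : MvPowerSeries (Fin n) K} {C D : ℚ}
    (hf : GaussValGe val r f C) (hg : GaussValGe val r g D) : GaussValGe val r (f * g) (C + D) :=
  fun e => by
    rw [cval, MvPowerSeries.coeff_mul, le_tval_iff]
    refine hv.valuation.map_le_sum fun p hp => ?_
    rw [Finset.HasAntidiagonal.mem_antidiagonal] at hp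
    calc (((C + D) + wt r e : ℚ) : WithTop ℚ)
        = ((C + wt r p.1 : ℚ) : WithTop ℚ) + ((D + wt r p.2 : ℚ) : WithTop ℚ) := by
          rw [← hp, wt_add, ← WithTop.coe_add]; ring_nf
      _ ≤ valQ val (MvPowerSeries.coeff p.1 f) + valQ val (MvPowerSeries.coeff p.2 g) :=
          add_le_add (le_tval_iff.1 (hf p.1)) (le_tval_iff.1 (hg p.2))
      _ = valQ val (MvPowerSeries.coeff p.1 f * MvPowerSeries.coeff p.2 g) :=
          (hv.valuation.map_mul _ _).symm

lemma eq_zero_of_forall_gaussValGe (hv : IsCDVField val) {f : MvPowerSeries (Fin n) K}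
    (hf : ∀ C, GaussValGe val r f C) : f = 0 := by
  ext e
  by_contra hne
  obtain ⟨x, hx⟩ := WithTop.ne_top_iff_exists.1 (tval_ne_top hv (r := r) hne e)
  have h := hf (x + 1) e
  rw [cval, ← hx, WithTop.coe_le_coe] at h
  linarith

lemma gaussValGe_monomial (hv : IsCDVField val) {c : K} {l : Fin n →₀ ℕ} {C : ℚ}
    (h : (C : WithTop ℚ) ≤ tval val r c l) : GaussValGe val r (MvPowerSeries.monomial l c) C :=
  fun e => by
    classical
    rw [cval, MvPowerSeries.coeff_monomial]
    split_ifs with he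
    · exact he ▸ h
    · rw [tval_zero hv]
      exact le_top

lemma IsTate.exists_gaussValGe {f : MvPowerSeries (Fin n) K} (hf : IsTate val r f) :
    ∃ C, GaussValGe val r f C := by
  obtain ⟨b, hb⟩ := ((hf 0).image (cval val r f)).bddBelow
  obtain ⟨C, hCb, hC0⟩ : ∃ C : ℚ, (C : WithTop ℚ) ≤ b ∧ C ≤ 0 := by
    induction b using WithTop.recTopCoe with
    | top => exact ⟨0, le_top, le_rfl⟩
    | coe b => exact ⟨min b 0, by exact_mod_cast min_le_left _ _, min_le_right _ _⟩
  refine ⟨C, fun e => ?_⟩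
  by_cases he : cval val r f e < ((0 : ℚ) : WithTop ℚ)
  · exact hCb.trans (hb ⟨e, he, rfl⟩)
  · exact le_trans (by exact_mod_cast hC0) (not_lt.1 he)

theorem exists_forall_gaussValGe_sub_sum (hv : IsCDVField val)
    {u : ℕ → MvPowerSeries (Fin n) K} (hu : ∀ C, ∃ N, ∀ m ≥ N, GaussValGe val r (u m) C) :
    ∃ q : MvPowerSeries (Fin n) K, ∀ (C : ℚ) (N : ℕ), (∀ m ≥ N, GaussValGe val r (u m) C) →
      ∀ M ≥ N, GaussValGe val r (q - ∑ m ∈ Finset.range M, u m) C := by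
  have hcoeff : ∀ e, ∃ l : K, ∀ (C : ℚ) (N : ℕ),
      (∀ m ≥ N, (C : WithTop ℚ) ≤ valQ val (MvPowerSeries.coeff e (u m))) → ∀ M ≥ N,
      (C : WithTop ℚ) ≤ valQ val (l - ∑ m ∈ Finset.range M, MvPowerSeries.coeff e (u m)) :=
    fun e => hv.exists_forall_le_valQ_sub_sum fun C => (hu (C - wt r e)).imp fun N hN m hm => by
      simpa using le_tval_iff.1 (hN m hm e)
  choose l hl using hcoeff
  let q : MvPowerSeries (Fin n) K := l
  refine ⟨q, fun C N hN M hM e => ?_⟩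
  rw [cval, map_sub, map_sum, le_tval_iff]
  exact hl e _ N (fun m hm => le_tval_iff.1 (hN m hm e)) M hM

end GaussValuation

section TateSubsets

variable {val : K → WithTop ℤ} {r : Fin n → ℚ}

lemma isTate_monomial (hv : IsCDVField val) (c : K) (l : Fin n →₀ ℕ) :
    IsTate val r (MvPowerSeries.monomial l c) := by
  classical
  refine fun C => (Set.finite_singleton l).subset fun e he => ?_
  by_contra hel
  rw [Set.mem_singleton_iff] at hel
  rw [Set.mem_ofPred_eq, cval, MvPowerSeries.coeff_monomial, if_neg hel, tval_zero hv] at he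
  exact not_top_lt he

lemma monomial_mem_tateIntSet (hv : IsCDVField val) {c : K} {l : Fin n →₀ ℕ}
    (h : (0 : WithTop ℚ) ≤ tval val r c l) :
    MvPowerSeries.monomial l c ∈ TateIntSet val r :=
  ⟨isTate_monomial hv c l, gaussValGe_monomial hv (C := 0) h⟩

lemma IsTate.add (hv : IsCDVField val) {f g : MvPowerSeries (Fin n) K} (hf : IsTate val r f)
    (hg : IsTate val r g) : IsTate val r (f + g) := fun C =>
  ((hf C).union (hg C)).subset fun e he => by
    by_contra h
    simp only [Set.mem_union, Set.mem_ofPred_eq, not_or, not_lt] at h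
    exact not_le.2 he (le_cval_add hv h.1 h.2)

lemma IsTate.of_forall_gaussValGe_sub (hv : IsCDVField val) {f : MvPowerSeries (Fin n) K}
    (h : ∀ C, ∃ p, IsTate val r p ∧ GaussValGe val r (f - p) C) : IsTate val r f := fun C => by
  obtain ⟨p, hp, hfp⟩ := h C
  refine (hp C).subset fun e he => ?_
  by_contra h'
  rw [Set.mem_ofPred_eq, not_lt] at h'
  exact not_le.2 he (by simpa using le_cval_add hv h' (hfp e))

structure IsGaussClosed (val : K → WithTop ℤ) (r : Fin n → ℚ)
    (A : Set (MvPowerSeries (Fin n) K)) : Prop where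
  subset_tate : A ⊆ TateSet val r
  zero_mem : 0 ∈ A
  add_mem : ∀ f ∈ A, ∀ g ∈ A, f + g ∈ A
  mem_of_forall_gaussValGe_sub :
    ∀ f, (∀ C, ∃ p ∈ A, GaussValGe val r (f - p) C) → f ∈ A

lemma IsGaussClosed.sum_mem {A : Set (MvPowerSeries (Fin n) K)} (hA : IsGaussClosed val r A)
    {ι : Type*} (s : Finset ι) {f : ι → MvPowerSeries (Fin n) K} (hf : ∀ i ∈ s, f i ∈ A) :
    ∑ i ∈ s, f i ∈ A := by
  classical
  induction s using Finset.induction_on with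
  | empty => exact hA.zero_mem
  | insert i s hi ih =>
    rw [Finset.sum_insert hi]
    exact hA.add_mem _ (hf i (s.mem_insert_self i)) _ (ih fun j hj => hf j (s.mem_insert_of_mem hj))

lemma isGaussClosed_tateSet (hv : IsCDVField val) : IsGaussClosed val r (TateSet val r) where
  subset_tate := subset_rfl
  zero_mem := show IsTate val r 0 by simpa using isTate_monomial hv (r := r) 0 0
  add_mem _ hf _ hg := IsTate.add hv hf hg
  mem_of_forall_gaussValGe_sub _ h :=
    IsTate.of_forall_gaussValGe_sub hv fun C => (h C).imp fun _ hp => hp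

lemma isGaussClosed_tateIntSet (hv : IsCDVField val) : IsGaussClosed val r (TateIntSet val r) where
  subset_tate _ hf := hf.1
  zero_mem := ⟨(isGaussClosed_tateSet hv).zero_mem, gaussValGe_zero hv 0⟩
  add_mem _ hf _ hg := ⟨IsTate.add hv hf.1 hg.1, fun e => le_cval_add hv (hf.2 e) (hg.2 e)⟩
  mem_of_forall_gaussValGe_sub f h := by
    refine ⟨IsTate.of_forall_gaussValGe_sub hv fun C => (h C).imp fun _ hp => ⟨hp.1.1, hp.2⟩,
      fun e => ?_⟩
    obtain ⟨p, hp, hfp⟩ := h 0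
    simpa using le_cval_add hv (C := 0) (hp.2 e) (hfp e)

lemma IsIdealOf.sub_mem {A J : Set (MvPowerSeries (Fin n) K)} (hJ : IsIdealOf A J)
    {f g : MvPowerSeries (Fin n) K} (hf : f ∈ J) (hg : g ∈ J) : f - g ∈ J :=
  sub_eq_add_neg f g ▸ hJ.add_mem f hf _ (hJ.neg_mem g hg)

lemma IsIdealOf.sum_mul_mem {A J : Set (MvPowerSeries (Fin n) K)} (hJ : IsIdealOf A J)
    {ι : Type*} (s : Finset ι) {a g : ι → MvPowerSeries (Fin n) K} (ha : ∀ i, a i ∈ A)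
    (hg : ∀ i, g i ∈ J) : ∑ i ∈ s, a i * g i ∈ J := by
  classical
  induction s using Finset.induction_on with
  | empty => exact hJ.zero_mem
  | insert i s hi ih =>
    rw [Finset.sum_insert hi]
    exact hJ.add_mem _ (hJ.smul_mem _ (ha i) _ (hg i)) _ ih

end TateSubsets

section LeadingTerms

variable {val : K → WithTop ℤ} {r : Fin n → ℚ} {mo : (Fin n →₀ ℕ) → (Fin n →₀ ℕ) → Prop}

lemma Finset.exists_mem_forall_rel_of_total {α : Type*} {R : α → α → Prop}
    (htotal : ∀ a b, R a b ∨ R b a) (htrans : ∀ a b c, R a b → R b c → R a c) {s : Finset α}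
    (hs : s.Nonempty) : ∃ x ∈ s, ∀ y ∈ s, R y x := by
  classical
  induction s using Finset.induction_on with
  | empty => exact absurd hs Finset.not_nonempty_empty
  | insert a s ha ih =>
    simp only [Finset.mem_insert, exists_eq_or_imp, forall_eq_or_imp]
    rcases s.eq_empty_or_nonempty with rfl | hs'
    · exact Or.inl ⟨(htotal a a).elim id id, by simp⟩
    · obtain ⟨x, hx, hmax⟩ := ih hs'
      rcases htotal a x with h | h
      · exact Or.inr ⟨x, hx, h, hmax⟩
      · exact Or.inl ⟨(htotal a a).elim id id, fun y hy => htrans y x a (hmax y hy) h⟩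

theorem exists_isLeadingTerm (hv : IsCDVField val) (hmo : IsMonomialOrder mo)
    {f : MvPowerSeries (Fin n) K} (hf : IsTate val r f) (h0 : f ≠ 0) :
    ∃ a i, IsLeadingTerm val r mo f a i := by
  obtain ⟨i₀, hi₀⟩ : ∃ i₀, MvPowerSeries.coeff i₀ f ≠ 0 := by
    by_contra! h
    exact h0 (MvPowerSeries.ext fun i => by simp [h i])
  obtain ⟨v, hv₀⟩ := WithTop.ne_top_iff_exists.1 (tval_ne_top hv (r := r) hi₀ i₀)
  have hi₀T : i₀ ∈ (hf (v + 1)).toFinset := by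
    rw [Set.Finite.mem_toFinset, Set.mem_ofPred_eq, cval, ← hv₀, WithTop.coe_lt_coe]
    linarith
  obtain ⟨i, hiT, hmax⟩ := Finset.exists_mem_forall_rel_of_total
    (R := fun e j => TermLe val r mo (MvPowerSeries.coeff e f) e (MvPowerSeries.coeff j f) j)
    (fun e j => termLe_total hmo _ _ e j) (fun _ _ _ => TermLe.trans hmo) ⟨i₀, hi₀T⟩
  rw [Set.Finite.mem_toFinset, Set.mem_ofPred_eq] at hiT
  refine ⟨_, i, rfl, fun hi => ?_, fun j _ hji => ?_⟩
  · rw [cval, hi, tval_zero hv] at hiT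
    exact not_top_lt hiT
  · by_cases hjT : j ∈ (hf (v + 1)).toFinset
    · exact (hmax j hjT).imp_right fun h => ⟨h.1, hji, h.2⟩
    · rw [Set.Finite.mem_toFinset, Set.mem_ofPred_eq, not_lt] at hjT
      exact Or.inl (hiT.trans_le hjT)

lemma IsLeadingTerm.ne_zero {f : MvPowerSeries (Fin n) K} {a : K} {i : Fin n →₀ ℕ}
    (h : IsLeadingTerm val r mo f a i) : f ≠ 0 :=
  fun h0 => h.2.1 (by rw [← h.1, h0, map_zero])

lemma IsLeadingTerm.termLt_coeff (hv : IsCDVField val) {f : MvPowerSeries (Fin n) K} {a : K}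
    {i e : Fin n →₀ ℕ} (h : IsLeadingTerm val r mo f a i) (he : e ≠ i) :
    TermLt val r mo (MvPowerSeries.coeff e f) e a i := by
  by_cases h0 : MvPowerSeries.coeff e f = 0
  · rw [h0]
    exact termLt_zero hv h.2.1 i e
  · exact h.2.2 e h0 he

lemma IsLeadingTerm.tval_le_cval (hv : IsCDVField val) {f : MvPowerSeries (Fin n) K} {a : K}
    {i : Fin n →₀ ℕ} (h : IsLeadingTerm val r mo f a i) (e : Fin n →₀ ℕ) :
    tval val r a i ≤ cval val r f e := by
  rcases eq_or_ne e i with rfl | hei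
  · rw [cval, h.1]
  · exact (h.termLt_coeff hv hei).tval_le

lemma exists_forall_isLeadingTerm_tval_le (hv : IsCDVField val) (f : MvPowerSeries (Fin n) K) :
    ∃ W : ℚ, ∀ b j, IsLeadingTerm val r mo f b j → tval val r b j ≤ W := by
  by_cases h : ∃ b j, IsLeadingTerm val r mo f b j
  · obtain ⟨b₀, j₀, h₀⟩ := h
    obtain ⟨W, hW⟩ := WithTop.ne_top_iff_exists.1 (tval_ne_top hv (r := r) h₀.2.1 j₀)
    refine ⟨W, fun b j hbj => ?_⟩
    rw [hW]
    exact (hbj.tval_le_cval hv j₀).trans_eq (by rw [cval, h₀.1])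
  · simp only [not_exists] at h
    exact ⟨0, fun b j hbj => absurd hbj (h b j)⟩

def IsLeadingTermQuotient (val : K → WithTop ℤ) (r : Fin n → ℚ)
    (mo : (Fin n →₀ ℕ) → (Fin n →₀ ℕ) → Prop) (f g : MvPowerSeries (Fin n) K) (c : K)
    (l : Fin n →₀ ℕ) : Prop :=
  ∃ b j, IsLeadingTerm val r mo f (c * b) (l + j) ∧ IsLeadingTerm val r mo g b j

theorem IsLeadingTermQuotient.termLt_coeff_sub (hv : IsCDVField val) (hmo : IsMonomialOrder mo)
    {f g : MvPowerSeries (Fin n) K} {c : K} {l : Fin n →₀ ℕ}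
    (h : IsLeadingTermQuotient val r mo f g c l) :
    ∃ a i, IsLeadingTerm val r mo f a i ∧
      ∀ e, TermLt val r mo (MvPowerSeries.coeff e (f - MvPowerSeries.monomial l c * g)) e a i := by
  classical
  obtain ⟨b, j, hf, hg⟩ := h
  refine ⟨_, _, hf, fun e => ?_⟩
  rw [map_sub, MvPowerSeries.coeff_monomial_mul]
  by_cases hei : e = l + j
  · subst hei
    rw [if_pos le_self_add, add_tsub_cancel_left, hf.1, hg.1, sub_self]
    exact termLt_zero hv hf.2.1 _ _
  · refine (hf.termLt_coeff hv hei).sub hv ?_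
    split_ifs with hle
    · obtain ⟨d, rfl⟩ := exists_add_of_le hle
      rw [add_tsub_cancel_left]
      exact (hg.termLt_coeff hv fun hd => hei (hd ▸ rfl)).mul_left hv hmo
        (left_ne_zero_of_mul hf.2.1) l
    · exact termLt_zero hv hf.2.1 _ _

lemma IsLeadingTermQuotient.le_tval (hv : IsCDVField val) {f g : MvPowerSeries (Fin n) K}
    {c : K} {l : Fin n →₀ ℕ} (h : IsLeadingTermQuotient val r mo f g c l) {C W : ℚ}
    (hf : GaussValGe val r f C) (hW : ∀ b j, IsLeadingTerm val r mo g b j → tval val r b j ≤ W) :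
    ((C - W : ℚ) : WithTop ℚ) ≤ tval val r c l := by
  obtain ⟨b, j, hfb, hgb⟩ := h
  have key := hf (l + j)
  rw [cval, hfb.1, tval_mul hv] at key
  have hbW := hW b j hgb
  obtain ⟨x, hx⟩ :=
    WithTop.ne_top_iff_exists.1 (tval_ne_top hv (r := r) (left_ne_zero_of_mul hfb.2.1) l)
  obtain ⟨y, hy⟩ := WithTop.ne_top_iff_exists.1 (tval_ne_top hv (r := r) hgb.2.1 j)
  rw [← hx, ← hy] at key
  rw [← hy] at hbW
  rw [← hx]
  norm_cast at key hbW ⊢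
  linarith

end LeadingTerms

section Division

variable {val : K → WithTop ℤ} {r : Fin n → ℚ} {mo : (Fin n →₀ ℕ) → (Fin n →₀ ℕ) → Prop}

/-- A strictly decreasing sequence of terms has `val_r` tending to `+∞`: the values `val_r`
of terms lie in `(1/D)ℤ`, so a bounded nondecreasing sequence of them is eventually constant,
after which the exponents strictly decrease for the well-founded monomial order. -/
theorem exists_forall_le_tval_of_termLt_succ (hv : IsCDVField val) (hmo : IsMonomialOrder mo)
    {a : ℕ → K} {i : ℕ → Fin n →₀ ℕ} (ha : ∀ m, a m ≠ 0)
    (h : ∀ m, TermLt val r mo (a (m + 1)) (i (m + 1)) (a m) (i m)) (C : ℚ) :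
    ∃ N, ∀ m ≥ N, (C : WithTop ℚ) ≤ tval val r (a m) (i m) := by
  obtain ⟨D, hD, hwt⟩ := exists_pos_mul_wt_eq_int r
  have hDq : (0 : ℚ) < D := by exact_mod_cast hD
  have hw : ∀ m, ∃ w : ℤ, tval val r (a m) (i m) = ((w / D : ℚ) : WithTop ℚ) := fun m => by
    obtain ⟨z, hz⟩ := exists_tval_eq hv (r := r) (ha m) (i m)
    obtain ⟨z', hz'⟩ := hwt (i m)
    refine ⟨D * z - z', ?_⟩
    rw [hz, WithTop.coe_inj]
    field_simp
    push_cast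
    linarith
  choose w hw using hw
  have hle : ∀ {m m'}, tval val r (a m) (i m) ≤ tval val r (a m') (i m') ↔ w m ≤ w m' := by
    intro m m'
    rw [hw, hw, WithTop.coe_le_coe, div_le_div_iff_of_pos_right hDq, Int.cast_le]
  have hmono : Monotone w := monotone_nat_of_le_succ fun m => hle.1 (h m).tval_le
  by_contra! hC
  have hbdd : ∀ m, w m ≤ ⌈C * D⌉ := fun m => by
    obtain ⟨m', hm', hlt⟩ := hC m
    rw [hw, WithTop.coe_lt_coe, div_lt_iff₀ hDq] at hlt
    exact (hmono hm').trans (Int.cast_le.1 (hlt.le.trans (Int.le_ceil _)))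
  obtain ⟨_, ⟨m₀, rfl⟩, hm₀⟩ := Int.exists_greatest_of_bdd (P := fun z => ∃ m, w m = z)
    ⟨_, fun _ ⟨m, hm⟩ => hm ▸ hbdd m⟩ ⟨w 0, 0, rfl⟩
  obtain ⟨m, hm⟩ := @WellFounded.not_rel_apply_succ _ _ ⟨hmo.wf⟩ fun m => i (m₀ + m)
  rcases h (m₀ + m) with hlt | ⟨-, hne, hmo'⟩
  · exact hle.not.1 (not_le.2 hlt) ((hm₀ _ ⟨_, rfl⟩).trans (hmono (Nat.le_add_right m₀ m)))
  · exact hm ⟨hmo', hne⟩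

theorem exists_forall_gaussValGe_of_termLt_succ (hv : IsCDVField val) (hmo : IsMonomialOrder mo)
    {F : ℕ → MvPowerSeries (Fin n) K} (hzero : ∀ m, F m = 0 → F (m + 1) = 0)
    (hlt : ∀ m, F m ≠ 0 → ∃ a i, IsLeadingTerm val r mo (F m) a i ∧
      ∀ e, TermLt val r mo (MvPowerSeries.coeff e (F (m + 1))) e a i)
    (C : ℚ) : ∃ N, ∀ m ≥ N, GaussValGe val r (F m) C := by
  by_cases h0 : ∃ N, F N = 0
  · obtain ⟨N, hN⟩ := h0
    refine ⟨N, fun m hm => ?_⟩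
    rw [show F m = 0 from Nat.le_induction hN (fun m _ => hzero m) m hm]
    exact gaussValGe_zero hv C
  · simp only [not_exists] at h0
    choose a i hLT hdesc using fun m => hlt m (h0 m)
    obtain ⟨N, hN⟩ := exists_forall_le_tval_of_termLt_succ hv hmo (fun m => (hLT m).2.1)
      (fun m => by simpa only [(hLT (m + 1)).1] using hdesc m (i (m + 1))) C
    exact ⟨N, fun m hm e => (hN m hm).trans ((hLT m).tval_le_cval hv e)⟩

lemma sub_sum_mul_eq_sub_sum_sub_mul {R ι : Type*} [CommRing R] [Fintype ι] {F : ℕ → R}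
    {τ : ℕ → ι → R} {g : ι → R} (hF : ∀ m, F (m + 1) = F m - ∑ k, τ m k * g k) (q : ι → R)
    (M : ℕ) :
    F 0 - ∑ k, q k * g k = F M - ∑ k, (q k - ∑ m ∈ Finset.range M, τ m k) * g k := by
  have htel : ∑ k, (∑ m ∈ Finset.range M, τ m k) * g k = F 0 - F M := by
    simp_rw [Finset.sum_mul]
    rw [Finset.sum_comm, ← Finset.sum_range_sub']
    exact Finset.sum_congr rfl fun m _ => by rw [hF, sub_sub_cancel]
  simp only [sub_mul, Finset.sum_sub_distrib, htel]
  ring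

structure IsDivisionRun (val : K → WithTop ℤ) (r : Fin n → ℚ)
    (mo : (Fin n →₀ ℕ) → (Fin n →₀ ℕ) → Prop) {s : ℕ} (g : Fin s → MvPowerSeries (Fin n) K)
    (F : ℕ → MvPowerSeries (Fin n) K) (τ : ℕ → Fin s → MvPowerSeries (Fin n) K) : Prop where
  succ_eq : ∀ m, F (m + 1) = F m - ∑ k, τ m k * g k
  step : ∀ m, (F m = 0 ∧ τ m = 0) ∨ ∃ k c l, IsLeadingTermQuotient val r mo (F m) (g k) c l ∧
    τ m = Pi.single k (MvPowerSeries.monomial l c)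

namespace IsDivisionRun

variable {s : ℕ} {g : Fin s → MvPowerSeries (Fin n) K} {F : ℕ → MvPowerSeries (Fin n) K}
  {τ : ℕ → Fin s → MvPowerSeries (Fin n) K}

theorem exists_forall_gaussValGe_remainder (hv : IsCDVField val) (hmo : IsMonomialOrder mo)
    (hrun : IsDivisionRun val r mo g F τ) (C : ℚ) :
    ∃ N, ∀ m ≥ N, GaussValGe val r (F m) C := by
  classical
  refine exists_forall_gaussValGe_of_termLt_succ hv hmo (fun m h0 => ?_) (fun m h0 => ?_) C
  · rcases hrun.step m with ⟨-, hτ0⟩ | ⟨k, c, l, ⟨b, j, hfb, -⟩, -⟩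
    · simp [hrun.succ_eq, h0, hτ0]
    · exact absurd h0 hfb.ne_zero
  · rcases hrun.step m with ⟨h, -⟩ | ⟨k, c, l, hq, hτk⟩
    · exact absurd h h0
    · rw [hrun.succ_eq, hτk]
      simpa [Pi.single_apply] using hq.termLt_coeff_sub hv hmo

theorem exists_forall_gaussValGe_quotient (hv : IsCDVField val) (hmo : IsMonomialOrder mo)
    (hrun : IsDivisionRun val r mo g F τ) (C : ℚ) :
    ∃ N, ∀ m ≥ N, ∀ k, GaussValGe val r (τ m k) C := by
  obtain ⟨W, hW⟩ : ∃ W : ℚ, ∀ k b j, IsLeadingTerm val r mo (g k) b j → tval val r b j ≤ W := by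
    choose W hW using fun k => exists_forall_isLeadingTerm_tval_le hv (r := r) (mo := mo) (g k)
    obtain ⟨W', hW'⟩ := Finite.exists_le W
    exact ⟨W', fun k b j h => (hW k b j h).trans (by exact_mod_cast hW' k)⟩
  obtain ⟨N, hN⟩ := hrun.exists_forall_gaussValGe_remainder hv hmo (C + W)
  refine ⟨N, fun m hm k => ?_⟩
  rcases hrun.step m with ⟨-, hτ0⟩ | ⟨k', c, l, hq, hτk⟩
  · rw [hτ0]
    exact gaussValGe_zero hv C
  · rw [hτk]
    by_cases hk : k = k'
    · subst hk
      rw [Pi.single_eq_same]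
      exact gaussValGe_monomial hv (by simpa using hq.le_tval hv (hN m hm) (hW k))
    · rw [Pi.single_eq_of_ne hk]
      exact gaussValGe_zero hv C

theorem exists_eq_sum_mul (hv : IsCDVField val) (hmo : IsMonomialOrder mo)
    (hg : ∀ k, IsTate val r (g k)) (hrun : IsDivisionRun val r mo g F τ) :
    ∃ q : Fin s → MvPowerSeries (Fin n) K, F 0 = ∑ k, q k * g k ∧
      ∀ k C, ∃ M, GaussValGe val r (q k - ∑ m ∈ Finset.range M, τ m k) C := by
  have hτ := hrun.exists_forall_gaussValGe_quotient hv hmo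
  choose q hq using fun k => exists_forall_gaussValGe_sub_sum hv (u := fun m => τ m k)
    fun C => (hτ C).imp fun N hN m hm => hN m hm k
  refine ⟨q, eq_of_sub_eq_zero (eq_zero_of_forall_gaussValGe hv (r := r) fun C => ?_),
    fun k C => ?_⟩
  · choose G hG using fun k => (hg k).exists_gaussValGe
    obtain ⟨G', hG'⟩ := Finite.exists_ge G
    obtain ⟨N, hN⟩ := hτ (C - G')
    obtain ⟨N', hN'⟩ := hrun.exists_forall_gaussValGe_remainder hv hmo C
    rw [sub_sum_mul_eq_sub_sum_sub_mul hrun.succ_eq q (max N N')]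
    refine (hN' _ (le_max_right _ _)).sub hv (gaussValGe_sum hv _ fun k _ => ?_)
    simpa using ((hq k _ N (fun m hm => hN m hm k) _ (le_max_left _ _)).mul hv
      ((hG k).mono (hG' k)))
  · obtain ⟨N, hN⟩ := hτ C
    exact ⟨N, hq k C N (fun m hm => hN m hm k) N le_rfl⟩

end IsDivisionRun

theorem exists_eq_sum_mul_of_forall_isLeadingTermQuotient (hv : IsCDVField val)
    (hmo : IsMonomialOrder mo) {A J : Set (MvPowerSeries (Fin n) K)} (hA : IsGaussClosed val r A)
    (hJ : IsIdealOf A J) {s : ℕ} {g : Fin s → MvPowerSeries (Fin n) K} (hgJ : ∀ k, g k ∈ J)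
    (hred : ∀ f ∈ J, f ≠ 0 → ∃ k c l, IsLeadingTermQuotient val r mo f (g k) c l ∧
      MvPowerSeries.monomial l c ∈ A)
    {f : MvPowerSeries (Fin n) K} (hf : f ∈ J) :
    ∃ q : Fin s → MvPowerSeries (Fin n) K, (∀ k, q k ∈ A) ∧ f = ∑ k, q k * g k := by
  classical
  have hstep : ∀ h : J, ∃ τ : Fin s → MvPowerSeries (Fin n) K, (∀ k, τ k ∈ A) ∧
      (((h : MvPowerSeries (Fin n) K) = 0 ∧ τ = 0) ∨ ∃ k c l,
          IsLeadingTermQuotient val r mo h (g k) c l ∧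
          τ = Pi.single k (MvPowerSeries.monomial l c)) := by
    rintro ⟨h, hJh⟩
    by_cases h0 : h = 0
    · exact ⟨0, fun _ => hA.zero_mem, Or.inl ⟨h0, rfl⟩⟩
    · obtain ⟨k, c, l, hq, hmem⟩ := hred h hJh h0
      refine ⟨Pi.single k (MvPowerSeries.monomial l c), fun k' => ?_, Or.inr ⟨k, c, l, hq, rfl⟩⟩
      by_cases hk : k' = k
      · subst hk
        simpa using hmem
      · simpa [Pi.single_eq_of_ne hk] using hA.zero_mem
  choose τ hτA hτ using hstep
  let next : J → J := fun h =>
    ⟨h - ∑ k, τ h k * g k, hJ.sub_mem h.2 (hJ.sum_mul_mem _ (hτA h) hgJ)⟩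
  let F : ℕ → J := fun m => next^[m] ⟨f, hf⟩
  have hrun : IsDivisionRun val r mo g (fun m => F m) (fun m => τ (F m)) :=
    ⟨fun m => by simp only [F, Function.iterate_succ_apply']; rfl, fun m => hτ (F m)⟩
  obtain ⟨q, hfq, hqA⟩ :=
    hrun.exists_eq_sum_mul hv hmo fun k => hA.subset_tate (hJ.subset (hgJ k))
  refine ⟨q, fun k => hA.mem_of_forall_gaussValGe_sub _ fun C => ?_, hfq⟩
  obtain ⟨M, hM⟩ := hqA k C
  exact ⟨_, hA.sum_mem _ fun m _ => hτA _ k, hM⟩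

end Division

section GroebnerBasis

variable {val : K → WithTop ℤ} {r : Fin n → ℚ} {mo : (Fin n →₀ ℕ) → (Fin n →₀ ℕ) → Prop}
  {J : Set (MvPowerSeries (Fin n) K)} {s : ℕ} {g : Fin s → MvPowerSeries (Fin n) K}

lemma IsGB.exists_isLeadingTermQuotient (hv : IsCDVField val) (hmo : IsMonomialOrder mo)
    (hG : IsGB val r mo J g) (hJ : J ⊆ TateSet val r) :
    ∀ f ∈ J, f ≠ 0 → ∃ k c l, IsLeadingTermQuotient val r mo f (g k) c l ∧
      MvPowerSeries.monomial l c ∈ TateSet val r := by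
  intro f hf h0
  obtain ⟨a, i, hfa⟩ := exists_isLeadingTerm hv hmo (hJ hf) h0
  obtain ⟨k, b, j, hgb, hb, -, l, rfl⟩ := hG.2 f hf a i hfa
  refine ⟨k, a * b⁻¹, l, ⟨b, j, ?_, hgb⟩, isTate_monomial hv _ _⟩
  rwa [inv_mul_cancel_right₀ hb, add_comm]

lemma IsGBInt.exists_isLeadingTermQuotient (hv : IsCDVField val) (hmo : IsMonomialOrder mo)
    (hG : IsGBInt val r mo J g) (hJ : J ⊆ TateIntSet val r) :
    ∀ f ∈ J, f ≠ 0 → ∃ k c l, IsLeadingTermQuotient val r mo f (g k) c l ∧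
      MvPowerSeries.monomial l c ∈ TateIntSet val r := by
  intro f hf h0
  obtain ⟨a, i, hfa⟩ := exists_isLeadingTerm hv hmo (hJ hf).1 h0
  obtain ⟨k, b, j, hgb, hb, -, l, rfl, hint⟩ := hG.2 f hf a i hfa
  refine ⟨k, a * b⁻¹, l, ⟨b, j, ?_, hgb⟩, monomial_mem_tateIntSet hv hint⟩
  rwa [inv_mul_cancel_right₀ hb, add_comm]

end GroebnerBasis

/-- a Gröbner basis of an ideal `J` of `K{X;r}` (resp. of `K{X;r}°`)
generates `J`. -/
theorem statement7 (val : K → WithTop ℤ) (hval : IsCDVField val) (r : Fin n → ℚ)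
    (mo : (Fin n →₀ ℕ) → (Fin n →₀ ℕ) → Prop) (hmo : IsMonomialOrder mo) :
    (∀ J : Set (MvPowerSeries (Fin n) K), IsIdealOf (TateSet val r) J →
      ∀ (s : ℕ) (g : Fin s → MvPowerSeries (Fin n) K), IsGB val r mo J g →
        ∀ f ∈ J, ∃ q : Fin s → MvPowerSeries (Fin n) K,
          (∀ k, q k ∈ TateSet val r) ∧ f = ∑ k, q k * g k) ∧
    (∀ J : Set (MvPowerSeries (Fin n) K), IsIdealOf (TateIntSet val r) J →
      ∀ (s : ℕ) (g : Fin s → MvPowerSeries (Fin n) K), IsGBInt val r mo J g →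
        ∀ f ∈ J, ∃ q : Fin s → MvPowerSeries (Fin n) K,
          (∀ k, q k ∈ TateIntSet val r) ∧ f = ∑ k, q k * g k) := by
  refine ⟨fun J hJ s g hG f hf => ?_, fun J hJ s g hG f hf => ?_⟩
  · exact exists_eq_sum_mul_of_forall_isLeadingTermQuotient hval hmo (isGaussClosed_tateSet hval)
      hJ (fun k => (hG.1 k).1) (hG.exists_isLeadingTermQuotient hval hmo hJ.subset) hf
  · exact exists_eq_sum_mul_of_forall_isLeadingTermQuotient hval hmo
      (isGaussClosed_tateIntSet hval) hJ (fun k => (hG.1 k).1)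
      (hG.exists_isLeadingTermQuotient hval hmo hJ.subset) hf
end
end

section
/- Let I be an ideal of K{X;r}° and let G be a Gröbner basis of I. Then G is also a Gröbner basis of the ideal J = I·K{X;r} of K{X;r} generated by I (equivalently, J = I[1/π]). -/
open MvPowerSeries

noncomputable section

variable {K : Type*} [Field K] {n : ℕ}

namespace IsCDVField

variable {val : K → WithTop ℤ}

lemma valQ_mul (hval : IsCDVField val) (x y : K) :
    valQ val (x * y) = valQ val x + valQ val y := by
  unfold valQ
  rw [hval.map_mul]
  cases val x <;> cases val y <;> simp [← WithTop.coe_add]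

lemma valQ_ne_top (hval : IsCDVField val) {c : K} (hc : c ≠ 0) : valQ val c ≠ ⊤ := by
  intro h
  exact hc ((hval.eq_top_iff c).mp (by simpa [valQ] using h))

lemma ne_zero_of_val_eq_coe (hval : IsCDVField val) {c : K} {m : ℤ} (hc : val c = m) :
    c ≠ 0 := by
  rintro rfl
  rw [(hval.eq_top_iff 0).mpr rfl] at hc
  exact WithTop.top_ne_coe hc

lemma tval_mul_left (hval : IsCDVField val) (r : Fin n → ℚ) (c x : K) (i : Fin n →₀ ℕ) :
    tval val r (c * x) i = valQ val c + tval val r x i := by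
  rw [tval, tval, hval.valQ_mul, add_assoc]

lemma termLt_mul_left (hval : IsCDVField val) {r : Fin n → ℚ}
    {mo : (Fin n →₀ ℕ) → (Fin n →₀ ℕ) → Prop} {c : K} (hc : c ≠ 0)
    {x y : K} {i j : Fin n →₀ ℕ} (h : TermLt val r mo x j y i) :
    TermLt val r mo (c * x) j (c * y) i := by
  have hc' := hval.valQ_ne_top hc
  simp only [TermLt, hval.tval_mul_left] at h ⊢
  rwa [WithTop.add_lt_add_iff_left hc', WithTop.add_left_inj hc']

lemma isLeadingTerm_C_mul (hval : IsCDVField val) {r : Fin n → ℚ}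
    {mo : (Fin n →₀ ℕ) → (Fin n →₀ ℕ) → Prop} {c : K} (hc : c ≠ 0)
    {f : MvPowerSeries (Fin n) K} {a : K} {i : Fin n →₀ ℕ}
    (h : IsLeadingTerm val r mo f a i) :
    IsLeadingTerm val r mo (C c * f) (c * a) i := by
  obtain ⟨hcoeff, ha, hlt⟩ := h
  refine ⟨by rw [coeff_C_mul, hcoeff], mul_ne_zero hc ha, fun j hj hji => ?_⟩
  rw [coeff_C_mul] at hj ⊢
  exact hval.termLt_mul_left hc (hlt j (right_ne_zero_of_mul hj) hji)

end IsCDVField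

lemma TIntDiv.tDiv {val : K → WithTop ℤ} {r : Fin n → ℚ} {a b : K} {i j : Fin n →₀ ℕ}
    (h : TIntDiv val r a i b j) : TDiv a i b j :=
  let ⟨ha, hb, k, hk, _⟩ := h
  ⟨ha, hb, k, hk⟩

/-- Leading terms of `J` are, up to a nonzero constant, leading terms of `I`, and such a
constant does not change the exponent that the leading terms of `g` must divide. -/
lemma IsGBInt.isGB_of_forall_C_mul_mem {val : K → WithTop ℤ} (hval : IsCDVField val)
    {r : Fin n → ℚ} {mo : (Fin n →₀ ℕ) → (Fin n →₀ ℕ) → Prop}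
    {I J : Set (MvPowerSeries (Fin n) K)} {s : ℕ} {g : Fin s → MvPowerSeries (Fin n) K}
    (hg : IsGBInt val r mo I g) (hIJ : I ⊆ J) (hJ : ∀ f ∈ J, ∃ c ≠ 0, C c * f ∈ I) :
    IsGB val r mo J g := by
  refine ⟨fun k => ⟨hIJ (hg.1 k).1, (hg.1 k).2⟩, fun f hf a i hlead => ?_⟩
  obtain ⟨c, hc, hcf⟩ := hJ f hf
  obtain ⟨k, b, j, hgk, hdiv⟩ := hg.2 _ hcf _ _ (hval.isLeadingTerm_C_mul hc hlead)
  obtain ⟨hb, -, hji⟩ := hdiv.tDiv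
  exact ⟨k, b, j, hgk, hb, hlead.2.1, hji⟩

theorem statement12_general (val : K → WithTop ℤ) (hval : IsCDVField val)
    (π : K) (hπ : val π = (1 : ℤ)) (r : Fin n → ℚ)
    (mo : (Fin n →₀ ℕ) → (Fin n →₀ ℕ) → Prop)
    (I : Set (MvPowerSeries (Fin n) K)) (hI : IsIdealOf (TateIntSet val r) I)
    (s : ℕ) (g : Fin s → MvPowerSeries (Fin n) K) (hg : IsGBInt val r mo I g) :
    IsGB val r mo
      {f | IsTate val r f ∧ ∃ k : ℕ, (MvPowerSeries.C (σ := Fin n) (R := K) (π ^ k)) * f ∈ I} g := by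
  have hπ0 : π ≠ 0 := hval.ne_zero_of_val_eq_coe hπ
  refine hg.isGB_of_forall_C_mul_mem hval (fun f hf => ⟨(hI.subset hf).1, 0, ?_⟩) ?_
  · simpa using hf
  · rintro f ⟨-, k, hk⟩
    exact ⟨π ^ k, pow_ne_zero k hπ0, hk⟩

/-- a Gröbner basis of an ideal `I` of `K{X;r}°` is also a Gröbner
basis of the ideal `J = I·K{X;r} = I[1/π]` of `K{X;r}`. -/
theorem statement12 (val : K → WithTop ℤ) (hval : IsCDVField val)
    (π : K) (hπ : val π = (1 : ℤ)) (r : Fin n → ℚ)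
    (mo : (Fin n →₀ ℕ) → (Fin n →₀ ℕ) → Prop) (hmo : IsMonomialOrder mo)
    (I : Set (MvPowerSeries (Fin n) K)) (hI : IsIdealOf (TateIntSet val r) I)
    (s : ℕ) (g : Fin s → MvPowerSeries (Fin n) K) (hg : IsGBInt val r mo I g) :
    IsGB val r mo
      {f | IsTate val r f ∧ ∃ k : ℕ, (MvPowerSeries.C (σ := Fin n) (R := K) (π ^ k)) * f ∈ I} g :=
  statement12_general val hval π hπ r mo I hI s g hg
end
end
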